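/- arXiv:2501.08092 — 2 statements merged into one kernel-verified Lean document; each statement's English description precedes it below -/
import Mathlib

section
/- The higher cardinality |BC_p|_{KU_p} equals 1 in π_0(KU_p) ≅ Z_p; consequently, since the map π_0(S_{K(1)}) → π_0(KU_p) exhibits the target as the quotient of the source by its nilradical, the cardinality |BC_p|_{S_{K(1)}} is a unit in π_0(S_{K(1)}). -/
structure CardinalityCalculus (R : Type*) [CommRing R] where
  /-- pointed connected π-finite 1-truncated spaces -/
  Space : Type*
  /-- the based loop space `Ω` -/
  loop : Space → Space
  /-- the higher cardinality `|A|_R ∈ π₀ R` -/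
  card : Space → R
  /-- the dimension `dim(R^A) ∈ π₀ R` -/
  dimFn : Space → R

theorem isUnit_of_map_eq_one {S T : Type*} [Ring S] [Ring T] (f : S →+* T)
    (hker : ∀ x : S, f x = 0 → IsNilpotent x) {b : S} (hb : f b = 1) : IsUnit b := by
  have hnil : IsNilpotent (b - 1) := hker _ (by rw [map_sub, hb, map_one, sub_self])
  simpa using hnil.isUnit_add_one

theorem card_BCp_eq_one_and_unit_general (p : ℕ) [Fact p.Prime]
    -- the cardinality calculus of `KU_p`, with `π₀(KU_p) ≅ ℤ_p`
    (KUp : CardinalityCalculus ℤ_[p]) (BCp : KUp.Space)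
    -- `dim(KU_p^{BC_p}) = |BC_p|_{KU_p} · |C_p|_{KU_p}` (here `C_p = Ω BC_p`)
    (hdim : KUp.dimFn BCp = KUp.card BCp * KUp.card (KUp.loop BCp))
    -- `dim(KU_p^{BC_p}) = p`
    (hd : KUp.dimFn BCp = (p : ℤ_[p]))
    -- `|C_p|_{KU_p} = p`
    (hc : KUp.card (KUp.loop BCp) = (p : ℤ_[p]))
    -- `π₀` of the K(1)-local sphere and the map `π₀(S_{K(1)}) → π₀(KU_p)`,
    -- surjective with nilpotent kernel (the quotient by the nilradical)
    (S : Type*) [CommRing S] (f : S →+* ℤ_[p])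
    (hker : ∀ x : S, f x = 0 → IsNilpotent x)
    -- `|BC_p|_{S_{K(1)}}`, mapping to `|BC_p|_{KU_p}`
    (b : S) (hb : f b = KUp.card BCp) :
    KUp.card BCp = 1 ∧ IsUnit b := by
  have hp : (p : ℤ_[p]) ≠ 0 := Nat.cast_ne_zero.2 (Fact.out : p.Prime).ne_zero
  have hcard : KUp.card BCp = 1 :=
    (mul_eq_right₀ hp).1 (by rw [← hc, ← hdim, hd, hc])
  exact ⟨hcard, isUnit_of_map_eq_one f hker (hb.trans hcard)⟩

theorem card_BCp_eq_one_and_unit (p : ℕ) [Fact p.Prime]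
    -- the cardinality calculus of `KU_p`, with `π₀(KU_p) ≅ ℤ_p`
    (KUp : CardinalityCalculus ℤ_[p]) (BCp : KUp.Space)
    -- `dim(KU_p^{BC_p}) = |BC_p|_{KU_p} · |C_p|_{KU_p}` (here `C_p = Ω BC_p`)
    (hdim : KUp.dimFn BCp = KUp.card BCp * KUp.card (KUp.loop BCp))
    -- `dim(KU_p^{BC_p}) = p`
    (hd : KUp.dimFn BCp = (p : ℤ_[p]))
    -- `|C_p|_{KU_p} = p`
    (hc : KUp.card (KUp.loop BCp) = (p : ℤ_[p]))
    -- `π₀` of the K(1)-local sphere and the map `π₀(S_{K(1)}) → π₀(KU_p)`,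
    -- surjective with nilpotent kernel (the quotient by the nilradical)
    (S : Type*) [CommRing S] (f : S →+* ℤ_[p])
    (hsurj : Function.Surjective f)
    (hker : ∀ x : S, f x = 0 → IsNilpotent x)
    -- `|BC_p|_{S_{K(1)}}`, mapping to `|BC_p|_{KU_p}`
    (b : S) (hb : f b = KUp.card BCp) :
    KUp.card BCp = 1 ∧ IsUnit b :=
  card_BCp_eq_one_and_unit_general p KUp BCp hdim hd hc S f hker b hb
end

section
/- A lax symmetric monoidal functor F: Span(Spaces^{π-finite p}) → C that preserves π-finite p-space colimits and whose restriction along the canonical symmetric monoidal functor Spaces^{π-finite p} → Span(Spaces^{π-finite p}) is strong symmetric monoidal, is itself strong symmetric monoidal. -/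
/-!
The structure maps of `ι ⋙ F` are those of `F` composed with the images under `F` of the structure
isomorphisms of the strong monoidal functor `ι`, so `F` is strong at the unit and on pairs of objects
in the image of `ι`. By naturality, the tensorator of `F` is an isomorphism at a pair of objects as
soon as it is one at an isomorphic pair, and every object of `Spn` is isomorphic to one in the
image of `ι`.
-/

open CategoryTheory

structure ColimitPreservationData (Spn C : Type*) [Category Spn] [Category C]
    (F : Spn ⥤ C) where
  /-- π-finite p-spaces -/
  Space : Type*
  /-- `A`-indexed diagrams in `Spn` -/
  Diag : Space → Spn → Type*
  /-- the colimit in `Spn` of an `A`-indexed diagram -/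
  colimSpn : ∀ {A Z}, Diag A Z → Spn
  /-- the colimit in `C` of the image diagram -/
  colimC : ∀ {A Z}, Diag A Z → C
  /-- the assembly map `colim_A F(X_•) → F(colim_A X_•)` -/
  assembly : ∀ {A Z} (X : Diag A Z), colimC X ⟶ F.obj (colimSpn X)

namespace CategoryTheory.Functor.LaxMonoidal

open MonoidalCategory

variable {B D E : Type*} [Category B] [Category D] [Category E]
  [MonoidalCategory B] [MonoidalCategory D] [MonoidalCategory E]

lemma isIso_ε_of_isIso_ε_comp (G : B ⥤ D) [G.Monoidal] (F : D ⥤ E) [F.LaxMonoidal]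
    (h : IsIso (ε (G ⋙ F))) : IsIso (ε F) := by
  rw [comp_ε] at h
  exact IsIso.of_isIso_comp_right _ (F.map (ε G))

lemma isIso_μ_obj_of_isIso_μ_comp (G : B ⥤ D) [G.Monoidal] (F : D ⥤ E) [F.LaxMonoidal]
    {X Y : B} (h : IsIso (μ (G ⋙ F) X Y)) : IsIso (μ F (G.obj X) (G.obj Y)) := by
  rw [comp_μ] at h
  exact IsIso.of_isIso_comp_right _ (F.map (μ G X Y))

lemma isIso_μ_of_iso (F : D ⥤ E) [F.LaxMonoidal] {X X' Y Y' : D} (e : X ≅ X') (e' : Y ≅ Y')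
    [IsIso (μ F X Y)] : IsIso (μ F X' Y') := by
  have : IsIso ((F.map e.hom ⊗ₘ F.map e'.hom) ≫ μ F X' Y') := by
    rw [μ_natural]
    infer_instance
  exact IsIso.of_isIso_comp_left (F.map e.hom ⊗ₘ F.map e'.hom) _

end CategoryTheory.Functor.LaxMonoidal

theorem strong_monoidal_of_restriction_strong_general
    (Sp Spn C : Type*) [Category Sp] [Category Spn] [Category C]
    [MonoidalCategory Sp] [MonoidalCategory Spn] [MonoidalCategory C]
    [SymmetricCategory Sp] [SymmetricCategory Spn] [SymmetricCategory C]
    -- the canonical symmetric monoidal functor, which is essentially surjective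
    (ι : Sp ⥤ Spn) [ι.Braided] [ι.EssSurj]
    -- the lax symmetric monoidal functor `F`
    (F : Spn ⥤ C) [F.LaxBraided]
    -- the restriction `ι ⋙ F` is strong symmetric monoidal
    (hε : IsIso (Functor.LaxMonoidal.ε (ι ⋙ F)))
    (hμ : ∀ A B : Sp, IsIso (Functor.LaxMonoidal.μ (ι ⋙ F) A B)) :
    IsIso (Functor.LaxMonoidal.ε F) ∧
      ∀ X Y : Spn, IsIso (Functor.LaxMonoidal.μ F X Y) := by
  open Functor.LaxMonoidal in
  refine ⟨isIso_ε_of_isIso_ε_comp ι F hε, fun X Y => ?_⟩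
  have := isIso_μ_obj_of_isIso_μ_comp ι F (hμ (ι.objPreimage X) (ι.objPreimage Y))
  exact isIso_μ_of_iso F (ι.objObjPreimageIso X) (ι.objObjPreimageIso Y)

theorem strong_monoidal_of_restriction_strong
    (Sp Spn C : Type*) [Category Sp] [Category Spn] [Category C]
    [MonoidalCategory Sp] [MonoidalCategory Spn] [MonoidalCategory C]
    [SymmetricCategory Sp] [SymmetricCategory Spn] [SymmetricCategory C]
    -- the canonical symmetric monoidal functor, which is essentially surjective
    (ι : Sp ⥤ Spn) [ι.Braided] [ι.EssSurj]
    -- the lax symmetric monoidal functor `F`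
    (F : Spn ⥤ C) [F.LaxBraided]
    -- `F` preserves π-finite p-space colimits
    (P : ColimitPreservationData Spn C F)
    (hP : ∀ {A Z} (X : P.Diag A Z), IsIso (P.assembly X))
    -- the restriction `ι ⋙ F` is strong symmetric monoidal
    (hε : IsIso (Functor.LaxMonoidal.ε (ι ⋙ F)))
    (hμ : ∀ A B : Sp, IsIso (Functor.LaxMonoidal.μ (ι ⋙ F) A B)) :
    IsIso (Functor.LaxMonoidal.ε F) ∧
      ∀ X Y : Spn, IsIso (Functor.LaxMonoidal.μ F X Y) :=
  strong_monoidal_of_restriction_strong_general Sp Spn C ι F hε hμ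
end
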